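/- Let r ∈ ℓ²(ℤ) have nonnegative entries, with norm ‖r‖ and tail norms E_N(r). There is an absolute constant C such that for every N ≥ 1, Σ_{|n|>N} Σ_{i≠n} Σ_{p≠n} r(n+i)²r(n+p)²/(|n-i||n-p|) ≤ C(‖r‖²/N + E_N(r)²)·‖r‖². -/

import Mathlib

/-!
By AM–GM, `1 / (|n - i| |n - p|) ≤ (1 / (n - i)² + 1 / (n - p)²) / 2`, so for fixed `n` the double
sum over `i, p` factors as `‖r‖² · ∑ₘ r(m)² / (2n - m)²` (substituting `m = n + i`). Summing over
`|n| > N` and exchanging the sums, `r(m)²` receives the weight `∑_{|n| > N} 1 / (2n - m)²`. This is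
at most `∑ 1 / k² ≤ 4` for every `m`, and at most `∑_{|n| > N} 1 / n² ≤ 4 / (N + 1)` when
`|m| ≤ N`, because then `|2n - m| ≥ |n|`. All sums are taken in `ℝ≥0∞`, where no summability
has to be checked.
-/

open scoped ENNReal

theorem ENNReal.ofReal_tsum_le_tsum_ofReal {ι : Type*} {f : ι → ℝ} (hf : ∀ i, 0 ≤ f i) :
    ENNReal.ofReal (∑' i, f i) ≤ ∑' i, ENNReal.ofReal (f i) := by
  by_cases h : Summable f
  · exact (ENNReal.ofReal_tsum_of_nonneg hf h).le
  · simp [tsum_eq_zero_of_not_summable h]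

theorem inv_abs_mul_abs_le (x y : ℝ) :
    (|x| * |y|)⁻¹ ≤ 2⁻¹ * (x ^ 2)⁻¹ + 2⁻¹ * (y ^ 2)⁻¹ := by
  have := two_mul_le_add_sq |x|⁻¹ |y|⁻¹
  rw [inv_pow, inv_pow, sq_abs, sq_abs] at this
  rw [mul_inv]
  linarith

-- `invSq 0 = 0`, since `(0 : ℝ)⁻¹ = 0`.
noncomputable def invSq (c : ℤ) : ℝ≥0∞ := ENNReal.ofReal ((c : ℝ) ^ 2)⁻¹

theorem ofReal_mul_div_abs_mul_abs_le {a b : ℝ} (ha : 0 ≤ a) (hb : 0 ≤ b) (c d : ℤ) :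
    ENNReal.ofReal (a * b / (((|c| : ℤ) : ℝ) * ((|d| : ℤ) : ℝ))) ≤
      ENNReal.ofReal a * ENNReal.ofReal b * (2⁻¹ * invSq c + 2⁻¹ * invSq d) := by
  have hbound : a * b / (((|c| : ℤ) : ℝ) * ((|d| : ℤ) : ℝ)) ≤
      a * b * (2⁻¹ * ((c : ℝ) ^ 2)⁻¹ + 2⁻¹ * ((d : ℝ) ^ 2)⁻¹) := by
    rw [div_eq_mul_inv, Int.cast_abs, Int.cast_abs]
    exact mul_le_mul_of_nonneg_left (inv_abs_mul_abs_le _ _) (mul_nonneg ha hb)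
  refine (ENNReal.ofReal_le_ofReal hbound).trans_eq ?_
  rw [ENNReal.ofReal_mul (mul_nonneg ha hb), ENNReal.ofReal_mul ha,
    ENNReal.ofReal_add (by positivity) (by positivity), ENNReal.ofReal_mul (by norm_num),
    ENNReal.ofReal_mul (by norm_num), ENNReal.ofReal_inv_of_pos two_pos, ENNReal.ofReal_ofNat]
  rfl

theorem ENNReal.tsum_tsum_mul_mul_half_add {ι : Type*} (ρ w : ι → ℝ≥0∞) :
    ∑' i, ∑' p, ρ i * ρ p * (2⁻¹ * w i + 2⁻¹ * w p) = (∑' i, ρ i) * ∑' i, ρ i * w i := by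
  have hsplit : ∀ i p, ρ i * ρ p * (2⁻¹ * w i + 2⁻¹ * w p) =
      2⁻¹ * (ρ i * w i) * ρ p + 2⁻¹ * ρ i * (ρ p * w p) := fun i p => by ring
  simp_rw [hsplit, ENNReal.tsum_add, ENNReal.tsum_mul_left, ENNReal.tsum_mul_right,
    ENNReal.tsum_mul_left]
  calc _ = (2⁻¹ + 2⁻¹) * ((∑' i, ρ i) * ∑' i, ρ i * w i) := by ring
    _ = _ := by rw [ENNReal.inv_two_add_inv_two, one_mul]

theorem tsum_nat_inv_sq_Ioi_le (k : ℕ) :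
    ∑' j : Set.Ioi k, ENNReal.ofReal (((j : ℕ) : ℝ) ^ 2)⁻¹ ≤ ENNReal.ofReal (2 / (k + 1)) := by
  rw [tsum_subtype (Set.Ioi k) fun j : ℕ => ENNReal.ofReal ((j : ℝ) ^ 2)⁻¹]
  refine ENNReal.tsum_le_of_sum_range_le fun n => ?_
  have hfilter : (Finset.range n).filter (· ∈ Set.Ioi k) = Finset.Ioo k n := by
    ext j; simp [and_comm]
  rw [Finset.sum_indicator_eq_sum_filter, hfilter,
    ← ENNReal.ofReal_sum_of_nonneg fun _ _ => by positivity]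
  exact ENNReal.ofReal_le_ofReal (sum_Ioo_inv_sq_le k n)

theorem ENNReal.tsum_int_comp_natAbs_le (a : ℕ → ℝ≥0∞) :
    ∑' n : ℤ, a n.natAbs ≤ 2 * ∑' j, a j := by
  rw [tsum_of_nat_of_neg_add_one ENNReal.summable ENNReal.summable, two_mul]
  refine add_le_add (by simp) ?_
  have hnat : ∀ n : ℕ, (-((n : ℤ) + 1)).natAbs = n + 1 := by omega
  simp only [hnat]
  exact ENNReal.tsum_comp_le_tsum_of_injective (add_left_injective 1) a

theorem invSq_eq_natAbs (c : ℤ) : invSq c = ENNReal.ofReal ((c.natAbs : ℝ) ^ 2)⁻¹ := by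
  rw [invSq, Nat.cast_natAbs, Int.cast_abs, sq_abs]

theorem tsum_invSq_abs_gt_le (k : ℕ) :
    ∑' n : {n : ℤ // (k : ℤ) < |n|}, invSq n ≤ ENNReal.ofReal (4 / (k + 1)) := by
  set v : ℕ → ℝ≥0∞ := fun j => ENNReal.ofReal ((j : ℝ) ^ 2)⁻¹
  have hind : ∀ n : ℤ, {n : ℤ | (k : ℤ) < |n|}.indicator invSq n =
      (Set.Ioi k).indicator v n.natAbs := by
    intro n
    have hiff : (k : ℤ) < |n| ↔ k < n.natAbs := by rw [Int.abs_eq_natAbs]; omega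
    simp only [Set.indicator, Set.mem_ofPred_eq, Set.mem_Ioi, hiff, invSq_eq_natAbs, v]
  calc ∑' n : {n : ℤ // (k : ℤ) < |n|}, invSq n
      = ∑' n : ℤ, (Set.Ioi k).indicator v n.natAbs := by
        rw [← tsum_congr hind, ← tsum_subtype]; rfl
    _ ≤ 2 * ∑' j : ℕ, (Set.Ioi k).indicator v j := ENNReal.tsum_int_comp_natAbs_le _
    _ ≤ 2 * ENNReal.ofReal (2 / (k + 1)) := by
        rw [← tsum_subtype]; gcongr; exact tsum_nat_inv_sq_Ioi_le k
    _ = ENNReal.ofReal (4 / (k + 1)) := by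
        rw [← ENNReal.ofReal_ofNat 2, ← ENNReal.ofReal_mul zero_le_two]; ring_nf

theorem tsum_invSq_le_four : ∑' c : ℤ, invSq c ≤ 4 := by
  have hsupp : Function.support invSq ⊆ {n : ℤ | ((0 : ℕ) : ℤ) < |n|} := by
    intro c hc
    simp only [Function.mem_support, Set.mem_ofPred_eq] at hc ⊢
    contrapose! hc
    simp [invSq, abs_nonpos_iff.1 hc]
  calc ∑' c, invSq c = ∑' n : {n : ℤ // ((0 : ℕ) : ℤ) < |n|}, invSq n :=
        (tsum_subtype_eq_of_support_subset hsupp).symm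
    _ ≤ ENNReal.ofReal (4 / ((0 : ℕ) + 1)) := tsum_invSq_abs_gt_le 0
    _ = 4 := by norm_num

theorem invSq_le_invSq {a b : ℤ} (ha : a ≠ 0) (h : |a| ≤ |b|) : invSq b ≤ invSq a := by
  rw [invSq, invSq, ← sq_abs (a : ℝ), ← sq_abs (b : ℝ)]
  refine ENNReal.ofReal_le_ofReal (inv_anti₀ (by positivity) ?_)
  rw [← Int.cast_abs, ← Int.cast_abs]
  gcongr

theorem tsum_invSq_two_mul_sub_le_four (s : Set ℤ) (m : ℤ) :
    ∑' n : s, invSq (2 * n - m) ≤ 4 := by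
  have hinj : Function.Injective fun n : s => 2 * (n : ℤ) - m :=
    fun a b h => Subtype.ext (by simpa using h)
  exact (ENNReal.tsum_comp_le_tsum_of_injective hinj invSq).trans tsum_invSq_le_four

theorem tsum_invSq_two_mul_sub_le (N : ℕ) {m : ℤ} (hm : |m| ≤ N) :
    ∑' n : {n : ℤ // (N : ℤ) < |n|}, invSq (2 * n - m) ≤ ENNReal.ofReal (4 / (N + 1)) := by
  refine le_trans (ENNReal.tsum_le_tsum fun n => invSq_le_invSq ?_ ?_) (tsum_invSq_abs_gt_le N)
  · exact abs_pos.1 ((Int.natCast_nonneg N).trans_lt n.2)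
  · have := n.2
    -- `|2n - m| ≥ 2|n| - |m| ≥ |n|`
    have := abs_sub_abs_le_abs_sub (2 * (n : ℤ)) m
    rw [abs_mul, abs_two] at this
    linarith

theorem tsum_tsum_mul_invSq_two_mul_sub_le (ρ : ℤ → ℝ≥0∞) (N : ℕ) :
    ∑' n : {n : ℤ // (N : ℤ) < |n|}, ∑' m, ρ m * invSq (2 * n - m) ≤
      ENNReal.ofReal (4 / (N + 1)) * ∑' m, ρ m + 4 * ∑' j : {j : ℤ // (N : ℤ) ≤ |j|}, ρ j := by
  rw [ENNReal.tsum_comm]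
  simp_rw [ENNReal.tsum_mul_left]
  have hpoint : ∀ m, ρ m * ∑' n : {n : ℤ // (N : ℤ) < |n|}, invSq (2 * n - m) ≤
      ENNReal.ofReal (4 / (N + 1)) * ρ m + {j : ℤ | (N : ℤ) ≤ |j|}.indicator (4 * ρ ·) m := by
    intro m
    by_cases hm : (N : ℤ) ≤ |m|
    · rw [Set.indicator_of_mem (s := {j : ℤ | (N : ℤ) ≤ |j|}) hm, mul_comm 4]
      exact le_add_left (mul_le_mul_right (tsum_invSq_two_mul_sub_le_four _ m) _)
    · rw [Set.indicator_of_notMem (s := {j : ℤ | (N : ℤ) ≤ |j|}) hm, add_zero,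
        mul_comm (ENNReal.ofReal _)]
      exact mul_le_mul_right (tsum_invSq_two_mul_sub_le N (not_le.1 hm).le) _
  refine (ENNReal.tsum_le_tsum hpoint).trans_eq ?_
  rw [ENNReal.tsum_add, ENNReal.tsum_mul_left, ← tsum_subtype, ENNReal.tsum_mul_left]
  rfl

theorem tsum_tsum_tsum_mul_half_invSq_le (ρ : ℤ → ℝ≥0∞) (N : ℕ) :
    ∑' n : {n : ℤ // (N : ℤ) < |n|}, ∑' i : {i : ℤ // i ≠ n}, ∑' p : {p : ℤ // p ≠ n},
        ρ (n + i) * ρ (n + p) * (2⁻¹ * invSq (n - i) + 2⁻¹ * invSq (n - p)) ≤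
      (ENNReal.ofReal (4 / (N + 1)) * ∑' m, ρ m + 4 * ∑' j : {j : ℤ // (N : ℤ) ≤ |j|}, ρ j) *
        ∑' m, ρ m := by
  have hinj : ∀ n : ℤ, Function.Injective fun i : {i : ℤ // i ≠ n} => n + i :=
    fun n => (add_right_injective n).comp Subtype.val_injective
  have hinner : ∀ n : ℤ, ∑' i : {i : ℤ // i ≠ n}, ∑' p : {p : ℤ // p ≠ n},
      ρ (n + i) * ρ (n + p) * (2⁻¹ * invSq (n - i) + 2⁻¹ * invSq (n - p)) ≤
        (∑' m, ρ m) * ∑' m, ρ m * invSq (2 * n - m) := by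
    intro n
    rw [ENNReal.tsum_tsum_mul_mul_half_add (fun i : {i : ℤ // i ≠ n} => ρ (n + i))]
    gcongr
    · exact ENNReal.tsum_comp_le_tsum_of_injective (hinj n) ρ
    · have hshift : ∀ i : ℤ, n - i = 2 * n - (n + i) := fun i => by ring
      simp only [hshift]
      exact ENNReal.tsum_comp_le_tsum_of_injective (hinj n) fun m => ρ m * invSq (2 * n - m)
  calc _ ≤ ∑' n : {n : ℤ // (N : ℤ) < |n|}, (∑' m, ρ m) * ∑' m, ρ m * invSq (2 * n - m) :=
        ENNReal.tsum_le_tsum fun n => hinner n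
    _ = (∑' m, ρ m) * ∑' n : {n : ℤ // (N : ℤ) < |n|}, ∑' m, ρ m * invSq (2 * n - m) :=
        ENNReal.tsum_mul_left
    _ ≤ _ := by
        rw [mul_comm]
        gcongr
        exact tsum_tsum_mul_invSq_two_mul_sub_le ρ N

theorem ofReal_tsum_tsum_tsum_div_le (r : ℤ → ℝ) (N : ℕ) :
    ENNReal.ofReal (∑' n : {n : ℤ // (N : ℤ) < |n|}, ∑' i : {i : ℤ // i ≠ n},
        ∑' p : {p : ℤ // p ≠ n},
          r (n + i) ^ 2 * r (n + p) ^ 2 / (((|n - i| : ℤ) : ℝ) * ((|n - p| : ℤ) : ℝ))) ≤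
      ∑' n : {n : ℤ // (N : ℤ) < |n|}, ∑' i : {i : ℤ // i ≠ n}, ∑' p : {p : ℤ // p ≠ n},
        ENNReal.ofReal (r (n + i) ^ 2) * ENNReal.ofReal (r (n + p) ^ 2) *
          (2⁻¹ * invSq (n - i) + 2⁻¹ * invSq (n - p)) := by
  have hterm : ∀ n i p : ℤ,
      0 ≤ r (n + i) ^ 2 * r (n + p) ^ 2 / (((|n - i| : ℤ) : ℝ) * ((|n - p| : ℤ) : ℝ)) :=
    fun n i p => by positivity
  refine (ENNReal.ofReal_tsum_le_tsum_ofReal fun n =>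
    tsum_nonneg fun i => tsum_nonneg fun p => hterm _ _ _).trans
      (ENNReal.tsum_le_tsum fun n => ?_)
  refine (ENNReal.ofReal_tsum_le_tsum_ofReal fun i =>
    tsum_nonneg fun p => hterm _ _ _).trans (ENNReal.tsum_le_tsum fun i => ?_)
  refine (ENNReal.ofReal_tsum_le_tsum_ofReal fun p => hterm _ _ _).trans
    (ENNReal.tsum_le_tsum fun p => ?_)
  exact ofReal_mul_div_abs_mul_abs_le (sq_nonneg _) (sq_nonneg _) _ _

theorem stmt_7 :
    ∃ C : ℝ, 0 < C ∧ ∀ (r : ℤ → ℝ), (∀ k, 0 ≤ r k) →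
      Summable (fun k => (r k) ^ 2) → ∀ N : ℕ, 1 ≤ N →
      ∑' n : {n : ℤ // (N : ℤ) < |n|}, ∑' i : {i : ℤ // i ≠ (n : ℤ)},
        ∑' p : {p : ℤ // p ≠ (n : ℤ)},
          (r ((n : ℤ) + (i : ℤ))) ^ 2 * (r ((n : ℤ) + (p : ℤ))) ^ 2 /
            (((|(n : ℤ) - (i : ℤ)| : ℤ) : ℝ) * ((|(n : ℤ) - (p : ℤ)| : ℤ) : ℝ)) ≤
        C * ((∑' k : ℤ, (r k) ^ 2) / N +
            ∑' j : {j : ℤ // (N : ℤ) ≤ |j|}, (r (j : ℤ)) ^ 2) *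
          (∑' k : ℤ, (r k) ^ 2) := by
  refine ⟨4, four_pos, fun r _ hsum N hN => ?_⟩
  set T := ∑' k : ℤ, (r k) ^ 2
  set E := ∑' j : {j : ℤ // (N : ℤ) ≤ |j|}, (r (j : ℤ)) ^ 2
  have hT : ENNReal.ofReal T = ∑' k, ENNReal.ofReal (r k ^ 2) :=
    ENNReal.ofReal_tsum_of_nonneg (fun k => sq_nonneg _) hsum
  have hE : ENNReal.ofReal E = ∑' j : {j : ℤ // (N : ℤ) ≤ |j|}, ENNReal.ofReal (r j ^ 2) :=
    ENNReal.ofReal_tsum_of_nonneg (fun k => sq_nonneg _) (hsum.subtype _)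
  have hT0 : 0 ≤ T := tsum_nonneg fun k => sq_nonneg _
  have hE0 : 0 ≤ E := tsum_nonneg fun k => sq_nonneg _
  have hbound := (ofReal_tsum_tsum_tsum_div_le r N).trans
    (tsum_tsum_tsum_mul_half_invSq_le (fun m => ENNReal.ofReal (r m ^ 2)) N)
  have hrhs : ENNReal.ofReal ((4 / (N + 1) * T + 4 * E) * T) =
      (ENNReal.ofReal (4 / (N + 1)) * ENNReal.ofReal T + 4 * ENNReal.ofReal E) *
        ENNReal.ofReal T := by
    rw [ENNReal.ofReal_mul (by positivity), ENNReal.ofReal_add (by positivity) (by positivity),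
      ENNReal.ofReal_mul (by positivity), ENNReal.ofReal_mul zero_le_four, ENNReal.ofReal_ofNat]
  rw [← hT, ← hE, ← hrhs, ENNReal.ofReal_le_ofReal_iff (by positivity)] at hbound
  refine hbound.trans ?_
  calc (4 / (N + 1) * T + 4 * E) * T ≤ (4 / N * T + 4 * E) * T := by gcongr; linarith
    _ = 4 * (T / N + E) * T := by ring
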